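/- Let X and Y be finite-valued random variables on a probability space, and define X̃ to be the random variable ω ↦ (the conditional distribution of Y given X = X(ω)) and Ỹ to be the random variable ω ↦ (the conditional distribution of X given Y = Y(ω)) (each taking finitely many values in the space of probability measures). Then the following are equivalent: (i) the pair (X,Y) is trivial; (ii) H[X̃ | Ỹ] = 0; (iii) H[Ỹ | X̃] = 0. -/

import Mathlib

open MeasureTheory Real
open scoped ENNReal

namespace SecureComputation

variable {Ω : Type*} [MeasurableSpace Ω]

/-- The pair random variable `⟨X,Y⟩`. -/
def pair {𝒳 𝒴 : Type*} (X : Ω → 𝒳) (Y : Ω → 𝒴) : Ω → 𝒳 × 𝒴 := fun ω => (X ω, Y ω)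

/-- Shannon entropy `H[X]` of a finite-valued random variable. -/
noncomputable def ent {𝒳 : Type*} (μ : Measure Ω) (X : Ω → 𝒳) : ℝ :=
  ∑' x : 𝒳, negMulLog ((μ (X ⁻¹' {x})).toReal)

/-- Mutual information `I[X;Y]`. -/
noncomputable def mi {𝒳 𝒴 : Type*} (μ : Measure Ω) (X : Ω → 𝒳) (Y : Ω → 𝒴) : ℝ :=
  ent μ X + ent μ Y - ent μ (pair X Y)

/-- Conditional mutual information `I[X;Y|Z]`. -/
noncomputable def cmi {𝒳 𝒴 𝒵 : Type*} (μ : Measure Ω) (X : Ω → 𝒳) (Y : Ω → 𝒴)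
    (Z : Ω → 𝒵) : ℝ :=
  ent μ (pair X Z) + ent μ (pair Y Z) - ent μ (pair (pair X Y) Z) - ent μ Z

/-- Conditional entropy `H[X|Y]`. -/
noncomputable def condEnt {𝒳 𝒴 : Type*} (μ : Measure Ω) (X : Ω → 𝒳) (Y : Ω → 𝒴) : ℝ :=
  ent μ (pair X Y) - ent μ Y

/-- A finite-valued random variable: preimages of points are measurable. -/
def DiscreteRV {𝒳 : Type*} (X : Ω → 𝒳) : Prop := ∀ x, MeasurableSet (X ⁻¹' {x})

/-- The pair `(X,Y)` is trivial: some finite-valued `Z` on the same space has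
`I[X;Y|Z] = 0`, `I[Z;X|Y] = 0`, `I[Z;Y|X] = 0`. -/
def IsTrivialPair {𝒳 𝒴 : Type*} (μ : Measure Ω) (X : Ω → 𝒳) (Y : Ω → 𝒴) : Prop :=
  ∃ (𝒵 : Type) (_ : Fintype 𝒵) (Z : Ω → 𝒵), DiscreteRV Z ∧
    cmi μ X Y Z = 0 ∧ cmi μ Z X Y = 0 ∧ cmi μ Z Y X = 0

/-- The random variable `ω ↦ (the conditional distribution of `Y` given `X = X ω`)`,
viewed as a (finitely-valued) map into the space of probability vectors on `𝒴`. -/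
noncomputable def condDist {𝒳 𝒴 : Type*} (μ : Measure Ω) (X : Ω → 𝒳) (Y : Ω → 𝒴) :
    Ω → (𝒴 → ℝ) :=
  fun ω y => (μ {ω' | Y ω' = y ∧ X ω' = X ω}).toReal / (μ {ω' | X ω' = X ω}).toReal

/-!
Write `f x = P(Y = · | X = x)` and `g y = P(X = · | Y = y)`, so that `X̃ = f ∘ X` and `Ỹ = g ∘ Y`.
A conditional entropy vanishes exactly when the first variable is almost surely a function of the
second, and by the equality case of Gibbs' inequality `I[A;B|C]` vanishes exactly when
`P(a,b,c) P(c) = P(a,c) P(b,c)`.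

If `H[X̃ | Ỹ] = 0`, then `Z = X̃` witnesses triviality: it is a function of `X`, a sufficient
statistic of `X` for `Y`, and almost surely a function of `Ỹ`, hence of `Y`.

Conversely, let `Z` witness triviality. For `(x, y)` of positive probability the Markov chains
`Z - Y - X` and `Z - X - Y` give `P(Z = · | X = x) = P(Z = · | Y = y)`, and the chain `Y - X - Z`
writes the latter as the mixture of the laws `P(Z = · | X = x')` with weights `g y`. Pushing it
through `P(Y = · | Z)` (the chain `X - Z - Y`) gives `f x`, so `f x` is a function of `g y` on the
support of `(X, Y)`, i.e. `H[X̃ | Ỹ] = 0`. Triviality is symmetric, which gives the third condition.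
-/

open InformationTheory

section

variable {α β γ δ : Type*}

lemma mul_log_div_mul_div {p x y r : ℝ} (hp : 0 ≤ p) (hx : p ≤ x) (hy : p ≤ y) (hr : p ≤ r) :
    p * log (p / (x * y / r)) = p * log p + p * log r - p * log x - p * log y := by
  rcases hp.eq_or_lt with h0 | hpos
  · simp [← h0]
  have hx := hpos.trans_le hx
  have hy := hpos.trans_le hy
  have hr := hpos.trans_le hr
  rw [log_div hpos.ne' (by positivity), log_div (by positivity) hr.ne', log_mul hx.ne' hy.ne']
  ring

lemma eq_mul_div_iff_mul_eq {p x y r : ℝ} (hpr : p ≤ r) (hp : 0 ≤ p) (hxr : x ≤ r) (hx : 0 ≤ x) :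
    p = x * y / r ↔ p * r = x * y := by
  rcases (hp.trans hpr).eq_or_lt with hr | hr
  · simp [← hr, le_antisymm (hr ▸ hpr) hp, le_antisymm (hr ▸ hxr) hx]
  · exact eq_div_iff hr.ne'

lemma sum_mul_log_div_eq_zero_iff {ι : Type*} [Fintype ι] {p q : ι → ℝ} (hp : ∀ i, 0 ≤ p i)
    (hq : ∀ i, 0 ≤ q i) (hpq : ∀ i, q i = 0 → p i = 0) (hsum : ∑ i, p i = ∑ i, q i) :
    ∑ i, p i * log (p i / q i) = 0 ↔ p = q := by
  have hkl (i : ι) : p i * log (p i / q i) = q i * klFun (p i / q i) + (p i - q i) := by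
    by_cases hqi : q i = 0
    · simp [hqi, hpq i hqi]
    · rw [klFun]
      field_simp
      ring
  have hnonneg (i : ι) : 0 ≤ q i * klFun (p i / q i) :=
    mul_nonneg (hq i) (klFun_nonneg (div_nonneg (hp i) (hq i)))
  simp only [hkl, Finset.sum_add_distrib, Finset.sum_sub_distrib, hsum, sub_self, add_zero,
    Finset.sum_eq_zero_iff_of_nonneg fun i _ => hnonneg i, Finset.mem_univ, true_implies]
  refine ⟨fun h => funext fun i => ?_, fun h i => by
    subst h
    by_cases hqi : p i = 0 <;> simp [hqi, klFun_one]⟩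
  rcases mul_eq_zero.1 (h i) with hqi | hkl
  · rw [hqi, hpq i hqi]
  · rw [klFun_eq_zero_iff (div_nonneg (hp i) (hq i))] at hkl
    exact (div_eq_one_iff_eq fun hqi => by simp [hqi] at hkl).1 hkl

omit [MeasurableSpace Ω] in
@[simp]
lemma pair_preimage_singleton (A : Ω → α) (B : Ω → β) (a : α) (b : β) :
    pair A B ⁻¹' {(a, b)} = A ⁻¹' {a} ∩ B ⁻¹' {b} := by
  ext ω
  simp [pair]

omit [MeasurableSpace Ω] in
lemma preimage_inter_preimage_comp [DecidableEq β] (A : Ω → α) (h : α → β) (a : α) (b : β) :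
    A ⁻¹' {a} ∩ (h ∘ A) ⁻¹' {b} = if h a = b then A ⁻¹' {a} else ∅ := by
  ext ω
  split_ifs with hab <;> simp +contextual [hab]

variable {μ : Measure Ω}

lemma DiscreteRV.comp [Countable α] {A : Ω → α} (hA : DiscreteRV A) (h : α → β) :
    DiscreteRV (h ∘ A) := fun b => by
  rw [Set.preimage_comp, ← Set.biUnion_preimage_singleton]
  exact .biUnion (Set.to_countable _) fun a _ => hA a

lemma DiscreteRV.pair {A : Ω → α} {B : Ω → β} (hA : DiscreteRV A) (hB : DiscreteRV B) :
    DiscreteRV (pair A B) := fun ⟨a, b⟩ => by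
  rw [pair_preimage_singleton]
  exact (hA a).inter (hB b)

lemma ent_comp_of_injective (μ : Measure Ω) (A : Ω → α) {ι : α → β} (hι : ι.Injective) :
    ent μ (ι ∘ A) = ent μ A := by
  have hsupp : Function.support (fun b => negMulLog (μ ((ι ∘ A) ⁻¹' {b})).toReal) ⊆
      Set.range ι := by
    intro b hb
    by_contra hb'
    rw [Function.mem_support, Set.preimage_comp, Set.preimage_singleton_eq_empty.2 hb'] at hb
    simp at hb
  rw [ent, ent, ← hι.tsum_eq hsupp]
  congr! with a
  ext ω
  simp [hι.eq_iff]

lemma ent_congr_ae {A A' : Ω → α} (h : A =ᵐ[μ] A') : ent μ A = ent μ A' :=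
  tsum_congr fun a => by rw [measure_congr (h.preimage {a})]

lemma condEnt_comp_of_injective (A : Ω → α) (B : Ω → β) {ι : α → γ} {κ : β → δ}
    (hι : ι.Injective) (hκ : κ.Injective) :
    condEnt μ (ι ∘ A) (κ ∘ B) = condEnt μ A B := by
  rw [condEnt, condEnt, ent_comp_of_injective μ B hκ,
    ← ent_comp_of_injective μ (pair A B) (hι.prodMap hκ)]
  rfl

lemma condEnt_eq_zero_of_ae_eq_comp {A : Ω → α} {B : Ω → β} {φ : β → α}
    (h : A =ᵐ[μ] φ ∘ B) : condEnt μ A B = 0 := by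
  have hpair : pair A B =ᵐ[μ] (fun b => (φ b, b)) ∘ B := h.mono fun ω hω => by
    simp [pair, hω]
  rw [condEnt, ent_congr_ae hpair, ent_comp_of_injective μ B fun b b' e => congrArg Prod.snd e,
    sub_self]

lemma cmi_comm (A : Ω → α) (B : Ω → β) (C : Ω → γ) : cmi μ A B C = cmi μ B A C := by
  have h : ent μ (pair (pair B A) C) = ent μ (pair (pair A B) C) :=
    ent_comp_of_injective μ (pair (pair A B) C) (Prod.swap_injective.prodMap Function.injective_id)
  rw [cmi, cmi, h]
  ring

lemma cmi_comp_left_eq_condEnt (A : Ω → α) (B : Ω → β) (h : α → γ) :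
    cmi μ (h ∘ A) A B = condEnt μ (h ∘ A) B := by
  have e : ent μ (pair (pair (h ∘ A) A) B) = ent μ (pair A B) :=
    ent_comp_of_injective μ (pair A B) (ι := fun p => ((h p.1, p.1), p.2))
      fun p q e => by simp_all [Prod.ext_iff]
  rw [cmi, condEnt, e]
  ring

lemma cmi_comp_cond_eq_zero (A : Ω → α) (B : Ω → β) (h : α → γ) :
    cmi μ (h ∘ A) B A = 0 := by
  have e₁ : ent μ (pair (h ∘ A) A) = ent μ A :=
    ent_comp_of_injective μ A (ι := fun a => (h a, a)) fun a a' e => congrArg Prod.snd e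
  have e₂ : ent μ (pair (pair (h ∘ A) B) A) = ent μ (pair B A) :=
    ent_comp_of_injective μ (pair B A) (ι := fun p => ((h p.2, p.1), p.2))
      fun p q e => by simp_all [Prod.ext_iff]
  rw [cmi, e₁, e₂]
  ring

lemma ae_measureReal_preimage_ne_zero [Countable α] [IsFiniteMeasure μ] (A : Ω → α) :
    ∀ᵐ ω ∂μ, μ.real (A ⁻¹' {A ω}) ≠ 0 := by
  rw [ae_iff]
  simp only [ne_eq, not_not]
  change μ (A ⁻¹' {a | μ.real (A ⁻¹' {a}) = 0}) = 0
  rw [measure_preimage_eq_zero_iff_of_countable (Set.to_countable _)]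
  exact fun a ha => (measureReal_eq_zero_iff).1 ha

lemma measureReal_preimage_le_comp [IsFiniteMeasure μ] (T : Ω → α) (h : α → β) (t : α) :
    μ.real (T ⁻¹' {t}) ≤ μ.real ((h ∘ T) ⁻¹' {h t}) :=
  measureReal_mono fun ω (hω : T ω = t) => show h (T ω) = h t by rw [hω]

lemma sum_measureReal_preimage_inter [IsFiniteMeasure μ] [Fintype α] {A : Ω → α}
    (hA : DiscreteRV A) (S : Set Ω) :
    ∑ a, μ.real (A ⁻¹' {a} ∩ S) = μ.real S := by
  have h := sum_measure_preimage_singleton (μ := μ.restrict S) Finset.univ fun a _ => hA a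
  simp only [Measure.restrict_apply (hA _), Finset.coe_univ, Set.preimage_univ,
    Measure.restrict_apply MeasurableSet.univ, Set.univ_inter] at h
  simp only [measureReal_def, ← ENNReal.toReal_sum fun a _ => measure_ne_top μ _, h]

lemma ent_comp_eq_neg_sum [IsFiniteMeasure μ] [Fintype α] [Fintype β] {T : Ω → α}
    (hT : DiscreteRV T) (h : α → β) :
    ent μ (h ∘ T) = -∑ t, μ.real (T ⁻¹' {t}) * log (μ.real ((h ∘ T) ⁻¹' {h t})) := by
  classical
  have hfiber (b : β) :
      μ.real ((h ∘ T) ⁻¹' {b}) = ∑ t with h t = b, μ.real (T ⁻¹' {t}) := by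
    rw [← sum_measureReal_preimage_inter hT, Finset.sum_filter]
    simp only [preimage_inter_preimage_comp, apply_ite μ.real, measureReal_empty]
  simp only [ent, tsum_fintype, negMulLog, neg_mul, Finset.sum_neg_distrib, neg_inj]
  rw [← Finset.sum_fiberwise Finset.univ h]
  refine Finset.sum_congr rfl fun b _ => ?_
  rw [Finset.sum_congr rfl fun t ht => by rw [(Finset.mem_filter.1 ht).2], ← Finset.sum_mul,
    ← hfiber, measureReal_def]

lemma condEnt_eq_sum [IsFiniteMeasure μ] [Fintype α] [Fintype β] {A : Ω → α} {B : Ω → β}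
    (hA : DiscreteRV A) (hB : DiscreteRV B) :
    condEnt μ A B = ∑ t : α × β, μ.real (pair A B ⁻¹' {t}) *
      (log (μ.real (B ⁻¹' {t.2})) - log (μ.real (pair A B ⁻¹' {t}))) := by
  have e₁ : ent μ (pair A B) = -∑ t, μ.real (pair A B ⁻¹' {t}) * log (μ.real (pair A B ⁻¹' {t})) :=
    ent_comp_eq_neg_sum (hA.pair hB) id
  have e₂ : ent μ B = -∑ t, μ.real (pair A B ⁻¹' {t}) * log (μ.real (B ⁻¹' {t.2})) :=
    ent_comp_eq_neg_sum (hA.pair hB) Prod.snd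
  simp only [condEnt, e₁, e₂, mul_sub, Finset.sum_sub_distrib]
  ring

lemma eq_of_condEnt_eq_zero [IsFiniteMeasure μ] [Fintype α] [Fintype β] {A : Ω → α} {B : Ω → β}
    (hA : DiscreteRV A) (hB : DiscreteRV B) (h : condEnt μ A B = 0) {a a' : α} {b : β}
    (ha : μ.real (A ⁻¹' {a} ∩ B ⁻¹' {b}) ≠ 0) (ha' : μ.real (A ⁻¹' {a'} ∩ B ⁻¹' {b}) ≠ 0) :
    a = a' := by
  have hle (a : α) : μ.real (A ⁻¹' {a} ∩ B ⁻¹' {b}) ≤ μ.real (B ⁻¹' {b}) :=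
    measureReal_mono Set.inter_subset_right
  have hterm (t : α × β) : 0 ≤ μ.real (pair A B ⁻¹' {t}) *
      (log (μ.real (B ⁻¹' {t.2})) - log (μ.real (pair A B ⁻¹' {t}))) := by
    rcases measureReal_nonneg.eq_or_lt with h0 | hpos
    · rw [← h0, zero_mul]
    · exact mul_nonneg hpos.le (sub_nonneg.2 (log_le_log hpos
        (measureReal_preimage_le_comp (pair A B) Prod.snd t)))
  have hfull (a : α) (ha : μ.real (A ⁻¹' {a} ∩ B ⁻¹' {b}) ≠ 0) :
      μ.real (A ⁻¹' {a} ∩ B ⁻¹' {b}) = μ.real (B ⁻¹' {b}) := by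
    rw [condEnt_eq_sum hA hB, Finset.sum_eq_zero_iff_of_nonneg fun t _ => hterm t] at h
    have h0 := h (a, b) (Finset.mem_univ _)
    rw [pair_preimage_singleton, mul_eq_zero, sub_eq_zero] at h0
    have hpos := measureReal_nonneg.lt_of_ne' ha
    exact (log_injOn_pos (hpos.trans_le (hle a)) hpos (h0.resolve_left ha)).symm
  by_contra hne
  have hdisj : Disjoint (A ⁻¹' {a} ∩ B ⁻¹' {b}) (A ⁻¹' {a'} ∩ B ⁻¹' {b}) :=
    ((Set.disjoint_singleton.2 hne).preimage A).mono Set.inter_subset_left Set.inter_subset_left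
  have hsub : μ.real (A ⁻¹' {a} ∩ B ⁻¹' {b} ∪ A ⁻¹' {a'} ∩ B ⁻¹' {b}) ≤ μ.real (B ⁻¹' {b}) :=
    measureReal_mono (Set.union_subset Set.inter_subset_right Set.inter_subset_right)
  rw [measureReal_union hdisj ((hA a').inter (hB b)), hfull a ha, hfull a' ha'] at hsub
  linarith [hfull a ha ▸ measureReal_nonneg.lt_of_ne' ha]

lemma exists_ae_eq_comp_of_condEnt_eq_zero [IsProbabilityMeasure μ] [Fintype α] [Fintype β]
    {A : Ω → α} {B : Ω → β} (hA : DiscreteRV A) (hB : DiscreteRV B) (h : condEnt μ A B = 0) :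
    ∃ φ : β → α, A =ᵐ[μ] φ ∘ B := by
  classical
  obtain ⟨ω₀⟩ := nonempty_of_isProbabilityMeasure μ
  refine ⟨fun b => if hb : ∃ a, μ.real (A ⁻¹' {a} ∩ B ⁻¹' {b}) ≠ 0 then hb.choose else A ω₀, ?_⟩
  filter_upwards [ae_measureReal_preimage_ne_zero (pair A B)] with ω hω
  rw [pair, pair_preimage_singleton] at hω
  have hb : ∃ a, μ.real (A ⁻¹' {a} ∩ B ⁻¹' {B ω}) ≠ 0 := ⟨A ω, hω⟩
  simp only [Function.comp_apply, dif_pos hb]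
  exact eq_of_condEnt_eq_zero hA hB h hω hb.choose_spec

lemma condEnt_eq_zero_of_condEnt_comp_eq_zero [IsProbabilityMeasure μ] [Fintype α] [Fintype γ]
    {A : Ω → α} {B : Ω → β} {h : β → γ} (hA : DiscreteRV A) (hhB : DiscreteRV (h ∘ B))
    (H : condEnt μ A (h ∘ B) = 0) : condEnt μ A B = 0 :=
  let ⟨φ, hφ⟩ := exists_ae_eq_comp_of_condEnt_eq_zero hA hhB H
  condEnt_eq_zero_of_ae_eq_comp (φ := φ ∘ h) hφ

lemma cmi_eq_sum [IsFiniteMeasure μ] [Fintype α] [Fintype β] [Fintype γ] {A : Ω → α}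
    {B : Ω → β} {C : Ω → γ} (hA : DiscreteRV A) (hB : DiscreteRV B) (hC : DiscreteRV C) :
    cmi μ A B C = ∑ t : (α × β) × γ, μ.real (pair (pair A B) C ⁻¹' {t}) *
      log (μ.real (pair (pair A B) C ⁻¹' {t}) / (μ.real (pair A C ⁻¹' {(t.1.1, t.2)}) *
        μ.real (pair B C ⁻¹' {(t.1.2, t.2)}) / μ.real (C ⁻¹' {t.2}))) := by
  have hT := (hA.pair hB).pair hC
  have eAC : ent μ (pair A C) = -∑ t, μ.real (pair (pair A B) C ⁻¹' {t}) *
      log (μ.real (pair A C ⁻¹' {(t.1.1, t.2)})) :=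
    ent_comp_eq_neg_sum hT fun t => (t.1.1, t.2)
  have eBC : ent μ (pair B C) = -∑ t, μ.real (pair (pair A B) C ⁻¹' {t}) *
      log (μ.real (pair B C ⁻¹' {(t.1.2, t.2)})) :=
    ent_comp_eq_neg_sum hT fun t => (t.1.2, t.2)
  have eABC : ent μ (pair (pair A B) C) = -∑ t, μ.real (pair (pair A B) C ⁻¹' {t}) *
      log (μ.real (pair (pair A B) C ⁻¹' {t})) := ent_comp_eq_neg_sum hT id
  have eC : ent μ C = -∑ t, μ.real (pair (pair A B) C ⁻¹' {t}) *
      log (μ.real (C ⁻¹' {t.2})) := ent_comp_eq_neg_sum hT Prod.snd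
  have hleAC (t : (α × β) × γ) :
      μ.real (pair (pair A B) C ⁻¹' {t}) ≤ μ.real (pair A C ⁻¹' {(t.1.1, t.2)}) :=
    measureReal_preimage_le_comp _ (fun t => (t.1.1, t.2)) t
  have hleBC (t : (α × β) × γ) :
      μ.real (pair (pair A B) C ⁻¹' {t}) ≤ μ.real (pair B C ⁻¹' {(t.1.2, t.2)}) :=
    measureReal_preimage_le_comp _ (fun t => (t.1.2, t.2)) t
  have hleC (t : (α × β) × γ) : μ.real (pair (pair A B) C ⁻¹' {t}) ≤ μ.real (C ⁻¹' {t.2}) :=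
    measureReal_preimage_le_comp _ Prod.snd t
  rw [Finset.sum_congr rfl fun t _ =>
    mul_log_div_mul_div measureReal_nonneg (hleAC t) (hleBC t) (hleC t)]
  simp only [cmi, eAC, eBC, eABC, eC, Finset.sum_add_distrib, Finset.sum_sub_distrib]
  ring

lemma sum_measureReal_inter_mul_div [IsProbabilityMeasure μ] [Fintype α] [Fintype β]
    [Fintype γ] {A : Ω → α} {B : Ω → β} {C : Ω → γ} (hA : DiscreteRV A) (hB : DiscreteRV B)
    (hC : DiscreteRV C) :
    ∑ t : (α × β) × γ, μ.real (pair A C ⁻¹' {(t.1.1, t.2)}) *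
      μ.real (pair B C ⁻¹' {(t.1.2, t.2)}) / μ.real (C ⁻¹' {t.2}) = 1 := by
  rw [← probReal_univ (μ := μ), ← sum_measureReal_preimage_inter hC Set.univ]
  simp only [Fintype.sum_prod_type, pair_preimage_singleton]
  rw [Finset.sum_comm_cycle]
  refine Finset.sum_congr rfl fun c _ => ?_
  simp only [← Finset.sum_div]
  rw [← Finset.sum_mul_sum, sum_measureReal_preimage_inter hA,
    sum_measureReal_preimage_inter hB, Set.inter_univ, mul_self_div_self]

/-- Conditional independence of `A` and `B` given `C`, as the product formula
`P(a,b,c) P(c) = P(a,c) P(b,c)`, which needs no division. -/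
def CondIndep (μ : Measure Ω) (A : Ω → α) (B : Ω → β) (C : Ω → γ) : Prop :=
  ∀ a b c, μ.real (A ⁻¹' {a} ∩ B ⁻¹' {b} ∩ C ⁻¹' {c}) * μ.real (C ⁻¹' {c}) =
    μ.real (A ⁻¹' {a} ∩ C ⁻¹' {c}) * μ.real (B ⁻¹' {b} ∩ C ⁻¹' {c})

lemma cmi_eq_zero_iff [IsProbabilityMeasure μ] [Fintype α] [Fintype β] [Fintype γ] {A : Ω → α}
    {B : Ω → β} {C : Ω → γ} (hA : DiscreteRV A) (hB : DiscreteRV B) (hC : DiscreteRV C) :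
    cmi μ A B C = 0 ↔ CondIndep μ A B C := by
  have hT := (hA.pair hB).pair hC
  have hsum : ∑ t : (α × β) × γ, μ.real (pair (pair A B) C ⁻¹' {t}) = 1 := by
    simpa using sum_measureReal_preimage_inter (μ := μ) hT Set.univ
  rw [cmi_eq_sum hA hB hC, sum_mul_log_div_eq_zero_iff (fun _ => measureReal_nonneg)
    (fun _ => by positivity) (fun t ht => ?_)
    (by rw [hsum, sum_measureReal_inter_mul_div hA hB hC]),
    funext_iff]
  · simp only [Prod.forall, pair_preimage_singleton, CondIndep]
    refine forall_congr' fun a => forall_congr' fun b => forall_congr' fun c => ?_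
    exact eq_mul_div_iff_mul_eq (measureReal_mono Set.inter_subset_right) measureReal_nonneg
      (measureReal_mono Set.inter_subset_right) measureReal_nonneg
  · simp only [div_eq_zero_iff, mul_eq_zero] at ht
    refine le_antisymm ?_ measureReal_nonneg
    rcases ht with (h | h) | h
    · exact h ▸ measureReal_preimage_le_comp _ (fun t => (t.1.1, t.2)) t
    · exact h ▸ measureReal_preimage_le_comp _ (fun t => (t.1.2, t.2)) t
    · exact h ▸ measureReal_preimage_le_comp _ Prod.snd t

/-- `P(B = b | A = a)`, with the junk value `0` when `P(A = a) = 0`. -/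
noncomputable def condProb (μ : Measure Ω) (A : Ω → α) (B : Ω → β) (a : α) (b : β) : ℝ :=
  μ.real (B ⁻¹' {b} ∩ A ⁻¹' {a}) / μ.real (A ⁻¹' {a})

lemma condDist_eq_comp (μ : Measure Ω) (A : Ω → α) (B : Ω → β) :
    condDist μ A B = condProb μ A B ∘ A :=
  rfl

lemma measureReal_inter_eq_condProb_mul [IsFiniteMeasure μ] (A : Ω → α) (B : Ω → β) (a : α)
    (b : β) : μ.real (B ⁻¹' {b} ∩ A ⁻¹' {a}) = condProb μ A B a b * μ.real (A ⁻¹' {a}) := by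
  rcases (measureReal_nonneg (μ := μ) (s := A ⁻¹' {a})).eq_or_lt with h0 | hpos
  · rw [← h0, mul_zero]
    exact le_antisymm (h0 ▸ measureReal_mono Set.inter_subset_right) measureReal_nonneg
  · exact (div_mul_cancel₀ _ hpos.ne').symm

namespace CondIndep

variable {A : Ω → α} {B : Ω → β} {C : Ω → γ}

lemma symm (h : CondIndep μ A B C) : CondIndep μ B A C := fun b a c => by
  rw [Set.inter_comm (B ⁻¹' {b}), mul_comm (μ.real (B ⁻¹' {b} ∩ C ⁻¹' {c}))]
  exact h a b c

lemma measureReal_inter_eq [IsFiniteMeasure μ] (h : CondIndep μ A B C) (a : α) (b : β) (c : γ) :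
    μ.real (A ⁻¹' {a} ∩ B ⁻¹' {b} ∩ C ⁻¹' {c}) =
      condProb μ C B c b * μ.real (A ⁻¹' {a} ∩ C ⁻¹' {c}) := by
  rcases (measureReal_nonneg (μ := μ) (s := C ⁻¹' {c})).eq_or_lt with h0 | hpos
  · rw [condProb, ← h0, div_zero, zero_mul]
    exact le_antisymm (h0 ▸ measureReal_mono Set.inter_subset_right) measureReal_nonneg
  · rw [condProb, div_mul_eq_mul_div, eq_div_iff hpos.ne', h a b c, mul_comm]

lemma condProb_eq_sum [IsFiniteMeasure μ] [Fintype γ] (h : CondIndep μ A B C)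
    (hC : DiscreteRV C) {a : α} (ha : μ.real (A ⁻¹' {a}) ≠ 0) (b : β) :
    condProb μ A B a b = ∑ c, condProb μ C B c b * condProb μ A C a c := by
  rw [condProb, div_eq_iff ha, Finset.sum_mul, ← sum_measureReal_preimage_inter hC]
  refine Finset.sum_congr rfl fun c _ => ?_
  rw [mul_assoc, ← measureReal_inter_eq_condProb_mul, Set.inter_comm (C ⁻¹' {c}) (A ⁻¹' {a}),
    ← h.measureReal_inter_eq, Set.inter_comm (C ⁻¹' {c}), Set.inter_comm (B ⁻¹' {b})]

end CondIndep

lemma condProb_eq_of_condIndep [IsFiniteMeasure μ] {A : Ω → α} {B : Ω → β} {C : Ω → γ}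
    (h₁ : CondIndep μ C A B) (h₂ : CondIndep μ C B A) {a : α} {b : β}
    (hab : μ.real (A ⁻¹' {a} ∩ B ⁻¹' {b}) ≠ 0) (c : γ) :
    condProb μ A C a c = condProb μ B C b c := by
  have hpos := measureReal_nonneg.lt_of_ne' hab
  have hA : μ.real (A ⁻¹' {a}) ≠ 0 := (hpos.trans_le (measureReal_mono Set.inter_subset_left)).ne'
  have hB : μ.real (B ⁻¹' {b}) ≠ 0 := (hpos.trans_le (measureReal_mono Set.inter_subset_right)).ne'
  have e₁ := h₁ c a b
  have e₂ := h₂ c b a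
  rw [Set.inter_right_comm, Set.inter_comm (B ⁻¹' {b})] at e₂
  rw [condProb, condProb, div_eq_div_iff hA hB]
  refine mul_right_cancel₀ hab ?_
  linear_combination μ.real (A ⁻¹' {a}) * e₁ - μ.real (B ⁻¹' {b}) * e₂

lemma exists_condProb_eq_comp_condProb [IsFiniteMeasure μ] [Fintype α] [Fintype γ]
    {A : Ω → α} {B : Ω → β} {C : Ω → γ} (hA : DiscreteRV A) (hC : DiscreteRV C)
    (hABC : CondIndep μ A B C) (hCAB : CondIndep μ C A B) (hCBA : CondIndep μ C B A) :
    ∃ Φ : (α → ℝ) → β → ℝ, ∀ a b, μ.real (A ⁻¹' {a} ∩ B ⁻¹' {b}) ≠ 0 →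
      condProb μ A B a = Φ (condProb μ B A b) := by
  -- `P(b' | a) = ∑ c, P(b' | c) P(c | a)`, and `P(c | a) = P(c | b) = ∑ a', P(c | a') P(a' | b)`.
  refine ⟨fun v b' => ∑ c, condProb μ C B c b' * ∑ a', condProb μ A C a' c * v a',
    fun a b hab => funext fun b' => ?_⟩
  have hpos := measureReal_nonneg.lt_of_ne' hab
  have ha : μ.real (A ⁻¹' {a}) ≠ 0 := (hpos.trans_le (measureReal_mono Set.inter_subset_left)).ne'
  have hb : μ.real (B ⁻¹' {b}) ≠ 0 := (hpos.trans_le (measureReal_mono Set.inter_subset_right)).ne'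
  rw [hABC.condProb_eq_sum hC ha b']
  refine Finset.sum_congr rfl fun c _ => ?_
  rw [condProb_eq_of_condIndep hCAB hCBA hab c, hCBA.symm.condProb_eq_sum hA hb c]

lemma condIndep_comp_of_condProb_eq [IsFiniteMeasure μ] [Fintype α] {A : Ω → α} {B : Ω → β}
    (hA : DiscreteRV A) (h : α → γ)
    (hh : ∀ a a', h a = h a' → condProb μ A B a = condProb μ A B a') :
    CondIndep μ A B (h ∘ A) := by
  classical
  intro a b s
  rw [Set.inter_right_comm, preimage_inter_preimage_comp]
  split_ifs with has
  · subst has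
    have hfiber : μ.real (B ⁻¹' {b} ∩ (h ∘ A) ⁻¹' {h a}) =
        condProb μ A B a b * μ.real ((h ∘ A) ⁻¹' {h a}) := by
      rw [← sum_measureReal_preimage_inter hA (B ⁻¹' {b} ∩ (h ∘ A) ⁻¹' {h a}),
        ← sum_measureReal_preimage_inter hA ((h ∘ A) ⁻¹' {h a}), Finset.mul_sum]
      refine Finset.sum_congr rfl fun a' _ => ?_
      rw [Set.inter_left_comm, preimage_inter_preimage_comp]
      split_ifs with ha'
      · rw [measureReal_inter_eq_condProb_mul, hh a' a ha']
      · simp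
    rw [hfiber, Set.inter_comm, measureReal_inter_eq_condProb_mul]
    ring
  · simp

lemma IsTrivialPair.symm {X : Ω → α} {Y : Ω → β} (h : IsTrivialPair μ X Y) :
    IsTrivialPair μ Y X :=
  let ⟨𝒵, hfin, Z, hZ, hXYZ, hZXY, hZYX⟩ := h
  ⟨𝒵, hfin, Z, hZ, cmi_comm (μ := μ) X Y Z ▸ hXYZ, hZYX, hZXY⟩

lemma condEnt_condDist_eq_zero_of_isTrivialPair [IsProbabilityMeasure μ] [Fintype α] [Fintype β]
    {X : Ω → α} {Y : Ω → β} (hX : DiscreteRV X) (hY : DiscreteRV Y) (h : IsTrivialPair μ X Y) :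
    condEnt μ (condDist μ X Y) (condDist μ Y X) = 0 := by
  obtain ⟨𝒵, _, Z, hZ, hXYZ, hZXY, hZYX⟩ := h
  obtain ⟨Φ, hΦ⟩ := exists_condProb_eq_comp_condProb hX hZ ((cmi_eq_zero_iff hX hY hZ).1 hXYZ)
    ((cmi_eq_zero_iff hZ hX hY).1 hZXY) ((cmi_eq_zero_iff hZ hY hX).1 hZYX)
  rw [condDist_eq_comp, condDist_eq_comp]
  refine condEnt_eq_zero_of_ae_eq_comp (φ := Φ) ?_
  filter_upwards [ae_measureReal_preimage_ne_zero (pair X Y)] with ω hω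
  exact hΦ _ _ (by simpa [pair] using hω)

lemma isTrivialPair_of_condEnt_condDist_eq_zero [IsProbabilityMeasure μ] {α β : Type} [Fintype α]
    [Fintype β] {X : Ω → α} {Y : Ω → β} (hX : DiscreteRV X) (hY : DiscreteRV Y)
    (h : condEnt μ (condDist μ X Y) (condDist μ Y X) = 0) : IsTrivialPair μ X Y := by
  let F := Set.rangeFactorization (condProb μ X Y)
  let G := Set.rangeFactorization (condProb μ Y X)
  let _ := Fintype.ofFinite (Set.range (condProb μ X Y))
  let _ := Fintype.ofFinite (Set.range (condProb μ Y X))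
  have hF : DiscreteRV (F ∘ X) := hX.comp F
  rw [condDist_eq_comp, condDist_eq_comp] at h
  have hFY : condEnt μ (F ∘ X) Y = 0 := by
    refine condEnt_eq_zero_of_condEnt_comp_eq_zero hF (hY.comp G) ?_
    rwa [← condEnt_comp_of_injective _ _ Subtype.val_injective Subtype.val_injective]
  refine ⟨Set.range (condProb μ X Y), inferInstance, F ∘ X, hF, ?_, ?_, ?_⟩
  · exact (cmi_eq_zero_iff hX hY hF).2
      (condIndep_comp_of_condProb_eq hX F fun a a' e => congrArg Subtype.val e)
  · rwa [cmi_comp_left_eq_condEnt]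
  · exact cmi_comp_cond_eq_zero X Y F

end

theorem stmt3_general {Ω : Type*} [MeasurableSpace Ω] (μ : Measure Ω) [IsProbabilityMeasure μ]
    {𝒳 𝒴 : Type} [Fintype 𝒳] [Fintype 𝒴]
    (X : Ω → 𝒳) (Y : Ω → 𝒴) (hX : DiscreteRV X) (hY : DiscreteRV Y) :
    [IsTrivialPair μ X Y,
      condEnt μ (condDist μ X Y) (condDist μ Y X) = 0,
      condEnt μ (condDist μ Y X) (condDist μ X Y) = 0].TFAE := by
  tfae_have 1 → 2 := condEnt_condDist_eq_zero_of_isTrivialPair hX hY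
  tfae_have 2 → 1 := isTrivialPair_of_condEnt_condDist_eq_zero hX hY
  tfae_have 1 → 3 := fun h => condEnt_condDist_eq_zero_of_isTrivialPair hY hX h.symm
  tfae_have 3 → 1 := fun h => (isTrivialPair_of_condEnt_condDist_eq_zero hY hX h).symm
  tfae_finish

/-- With `X̃ = (conditional distribution of Y given X = X(·))` and
`Ỹ = (conditional distribution of X given Y = Y(·))`, the following are equivalent:
(i) the pair `(X,Y)` is trivial; (ii) `H[X̃ | Ỹ] = 0`; (iii) `H[Ỹ | X̃] = 0`. -/
theorem stmt3 {Ω : Type*} [MeasurableSpace Ω] (μ : Measure Ω) [IsProbabilityMeasure μ]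
    {𝒳 𝒴 : Type} [Fintype 𝒳] [Fintype 𝒴] [Nonempty 𝒳] [Nonempty 𝒴]
    (X : Ω → 𝒳) (Y : Ω → 𝒴) (hX : DiscreteRV X) (hY : DiscreteRV Y) :
    [IsTrivialPair μ X Y,
      condEnt μ (condDist μ X Y) (condDist μ Y X) = 0,
      condEnt μ (condDist μ Y X) (condDist μ X Y) = 0].TFAE :=
  stmt3_general μ X Y hX hY

end SecureComputation
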